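/- Let n ≥ 1 and let Q'_n(8,4) be the cylinder octagonal-quadrilateral network: the simple graph on the 8n vertices u_1,…,u_{4n}, v_1,…,v_{4n} whose edges are u_i u_{i+1} and v_i v_{i+1} for 1 ≤ i ≤ 4n−1, the closing edges u_{4n} u_1 and v_{4n} v_1, and u_i v_i for every i ≡ 0 or 1 (mod 4). Then the characteristic polynomial of the Laplacian matrix of Q'_n(8,4) factors as the product of the characteristic polynomial of the Laplacian matrix of the cycle C_{4n} and the characteristic polynomial of the 4n×4n matrix L'_S(n) (the symmetric matrix with diagonal entries 4 at positions j ≡ 0 or 1 (mod 4) and 2 at positions j ≡ 2 or 3 (mod 4), entries −1 on the sub- and super-diagonal, corner entries −1, all other entries 0). -/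
import Mathlib


/-- Underlying relation of the cylinder octagonal-quadrilateral network `Q'_n(8,4)`:
`Sum.inl i` is the vertex `u_{i+1}`, `Sum.inr i` is the vertex `v_{i+1}`. -/
def cylinderRel (n : ℕ) : (Fin (4 * n) ⊕ Fin (4 * n)) → (Fin (4 * n) ⊕ Fin (4 * n)) → Prop
  | Sum.inl i, Sum.inl j => i.val + 1 = j.val ∨ (i.val = 4 * n - 1 ∧ j.val = 0)
  | Sum.inr i, Sum.inr j => i.val + 1 = j.val ∨ (i.val = 4 * n - 1 ∧ j.val = 0)
  | Sum.inl i, Sum.inr j => i = j ∧ ((i.val + 1) % 4 = 0 ∨ (i.val + 1) % 4 = 1)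
  | Sum.inr _, Sum.inl _ => False

instance (n : ℕ) : DecidableRel (cylinderRel n) := fun a b => by
  rcases a with i | i <;> rcases b with j | j <;> simp only [cylinderRel] <;> infer_instance

/-- The cylinder octagonal-quadrilateral network `Q'_n(8,4)`. -/
def cylinder (n : ℕ) : SimpleGraph (Fin (4 * n) ⊕ Fin (4 * n)) :=
  SimpleGraph.fromRel (cylinderRel n)

instance (n : ℕ) : DecidableRel (cylinder n).Adj := fun a b =>
  decidable_of_iff (a ≠ b ∧ (cylinderRel n a b ∨ cylinderRel n b a)) Iff.rfl

/-- The matrix `L'_S(n)`: 4n×4n, diagonal entries 4 at (1-indexed) positions ≡ 0,1 (mod 4)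
and 2 at positions ≡ 2,3 (mod 4), −1 on the sub/super-diagonal, −1 in the corners. -/
def LS' (n : ℕ) : Matrix (Fin (4 * n)) (Fin (4 * n)) ℝ :=
  Matrix.of fun i j =>
    if i.val = j.val then
      (if (i.val + 1) % 4 = 0 ∨ (i.val + 1) % 4 = 1 then 4 else 2)
    else if i.val + 1 = j.val ∨ j.val + 1 = i.val then -1
    else if (i.val = 0 ∧ j.val = 4 * n - 1) ∨ (j.val = 0 ∧ i.val = 4 * n - 1) then -1
    else 0

open Matrix Polynomial in
lemma det_fromBlocks_symm {m R : Type*} [DecidableEq m] [Fintype m] [CommRing R]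
    (A B : Matrix m m R) :
    (Matrix.fromBlocks A B B A).det = (A + B).det * (A - B).det := by
  have key : Matrix.fromBlocks (1 : Matrix m m R) (1 : Matrix m m R) (0 : Matrix m m R) (1 : Matrix m m R) * Matrix.fromBlocks A B B A *
      Matrix.fromBlocks (1 : Matrix m m R) (-1 : Matrix m m R) (0 : Matrix m m R) (1 : Matrix m m R) =
      Matrix.fromBlocks (A + B) 0 B (A - B) := by
    rw [Matrix.fromBlocks_multiply, Matrix.fromBlocks_multiply, Matrix.fromBlocks_inj]
    refine ⟨?_, ?_, ?_, ?_⟩ <;>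
      simp [Matrix.mul_neg, Matrix.neg_mul, sub_eq_add_neg] <;> abel
  have h1 : (Matrix.fromBlocks (1 : Matrix m m R) (1 : Matrix m m R) (0 : Matrix m m R) (1 : Matrix m m R)).det = 1 := by
    rw [Matrix.det_fromBlocks_zero₂₁]; simp
  have h2 : (Matrix.fromBlocks (1 : Matrix m m R) (-1 : Matrix m m R) (0 : Matrix m m R) (1 : Matrix m m R)).det = 1 := by
    rw [Matrix.det_fromBlocks_zero₂₁]; simp
  have := congrArg Matrix.det key
  rw [Matrix.det_mul, Matrix.det_mul, h1, h2, Matrix.det_fromBlocks_zero₁₂,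
    one_mul, mul_one] at this
  exact this

open Matrix Polynomial in
lemma charpoly_fromBlocks_symm {m R : Type*} [DecidableEq m] [Fintype m] [CommRing R]
    (A B : Matrix m m R) :
    (Matrix.fromBlocks A B B A).charpoly = (A + B).charpoly * (A - B).charpoly := by
  have hadd : Matrix.charmatrix (A + B) = A.charmatrix + (-(B.map C)) := by
    ext i j
    by_cases h : i = j <;>
      simp [h, Matrix.charmatrix_apply, Matrix.diagonal_apply, Matrix.map_apply, sub_eq_add_neg] <;>
      ring
  have hsub : Matrix.charmatrix (A - B) = A.charmatrix - (-(B.map C)) := by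
    ext i j
    by_cases h : i = j <;>
      simp [h, Matrix.charmatrix_apply, Matrix.diagonal_apply, Matrix.map_apply, sub_eq_add_neg] <;>
      ring
  rw [show (Matrix.fromBlocks A B B A).charpoly
      = (Matrix.charmatrix (Matrix.fromBlocks A B B A)).det from rfl,
    Matrix.charmatrix_fromBlocks, det_fromBlocks_symm, ← hadd, ← hsub]
  rfl

lemma fin_sub_val_one {k : ℕ} (hk : 2 ≤ k) (i j : Fin k) :
    (j - i).val = 1 ↔ (i.val + 1 = j.val ∨ (i.val = k - 1 ∧ j.val = 0)) := by
  rw [Fin.sub_def]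
  simp only
  have hi := i.isLt
  have hj := j.isLt
  rcases Nat.lt_or_ge (k - i.val + j.val) k with h | h
  · rw [Nat.mod_eq_of_lt h]; omega
  · rw [Nat.mod_eq_sub_mod h, Nat.mod_eq_of_lt (by omega)]; omega

lemma cycle_adj_iff {k : ℕ} (hk : 2 ≤ k) (i j : Fin k) :
    (SimpleGraph.cycleGraph k).Adj i j ↔
      ((i.val + 1 = j.val ∨ (i.val = k - 1 ∧ j.val = 0)) ∨
       (j.val + 1 = i.val ∨ (j.val = k - 1 ∧ i.val = 0))) := by
  rw [SimpleGraph.cycleGraph_adj', fin_sub_val_one hk j i, fin_sub_val_one hk i j]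
  tauto

lemma cycle_degree {k : ℕ} (hk : 3 ≤ k) (v : Fin k) :
    (SimpleGraph.cycleGraph k).degree v = 2 := by
  obtain ⟨m, rfl⟩ : ∃ m, k = m + 3 := ⟨k - 3, by omega⟩
  exact SimpleGraph.cycleGraph_degree_three_le

lemma cylinder_adj_ll {n : ℕ} (hn : 1 ≤ n) (i j : Fin (4 * n)) :
    (cylinder n).Adj (.inl i) (.inl j) ↔ (SimpleGraph.cycleGraph (4 * n)).Adj i j := by
  rw [cylinder, SimpleGraph.fromRel_adj, cycle_adj_iff (by omega)]
  simp only [cylinderRel, ne_eq, Sum.inl.injEq]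
  constructor
  · exact fun h => h.2
  · intro h
    refine ⟨fun hij => ?_, h⟩
    rw [Fin.ext_iff] at hij
    have := i.isLt
    omega

lemma cylinder_adj_rr {n : ℕ} (hn : 1 ≤ n) (i j : Fin (4 * n)) :
    (cylinder n).Adj (.inr i) (.inr j) ↔ (SimpleGraph.cycleGraph (4 * n)).Adj i j := by
  rw [cylinder, SimpleGraph.fromRel_adj, cycle_adj_iff (by omega)]
  simp only [cylinderRel, ne_eq, Sum.inr.injEq]
  constructor
  · exact fun h => h.2
  · intro h
    refine ⟨fun hij => ?_, h⟩
    rw [Fin.ext_iff] at hij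
    have := i.isLt
    omega

lemma cylinder_adj_lr {n : ℕ} (i j : Fin (4 * n)) :
    (cylinder n).Adj (.inl i) (.inr j) ↔
      (i = j ∧ ((i.val + 1) % 4 = 0 ∨ (i.val + 1) % 4 = 1)) := by
  rw [cylinder, SimpleGraph.fromRel_adj]
  simp [cylinderRel]

lemma cylinder_adj_rl {n : ℕ} (i j : Fin (4 * n)) :
    (cylinder n).Adj (.inr i) (.inl j) ↔
      (j = i ∧ ((j.val + 1) % 4 = 0 ∨ (j.val + 1) % 4 = 1)) := by
  rw [(cylinder n).adj_comm, cylinder_adj_lr]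

/-- Diagonal indicator matrix of the cross edges. -/
def crossD (n : ℕ) : Matrix (Fin (4 * n)) (Fin (4 * n)) ℝ :=
  Matrix.diagonal (fun i => if (i.val + 1) % 4 = 0 ∨ (i.val + 1) % 4 = 1 then 1 else 0)

lemma cylinder_degree_inl {n : ℕ} (hn : 1 ≤ n) (i : Fin (4 * n)) :
    (((cylinder n).degree (.inl i) : ℕ) : ℝ) =
      2 + (if (i.val + 1) % 4 = 0 ∨ (i.val + 1) % 4 = 1 then 1 else 0) := by
  rw [SimpleGraph.degree_eq_sum_if_adj, Fintype.sum_sum_type]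
  have h1 : ∑ j : Fin (4 * n), (if (cylinder n).Adj (.inl i) (.inl j) then (1 : ℝ) else 0)
      = 2 := by
    have e : (∑ j : Fin (4 * n), if (cylinder n).Adj (.inl i) (.inl j) then (1 : ℝ) else 0)
        = ∑ j : Fin (4 * n), if (SimpleGraph.cycleGraph (4 * n)).Adj i j then (1 : ℝ) else 0 :=
      Finset.sum_congr rfl fun j _ => if_congr (cylinder_adj_ll hn i j) rfl rfl
    rw [e, ← SimpleGraph.degree_eq_sum_if_adj, cycle_degree (by omega)]
    norm_num
  have h2 : ∑ j : Fin (4 * n), (if (cylinder n).Adj (.inl i) (.inr j) then (1 : ℝ) else 0)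
      = (if (i.val + 1) % 4 = 0 ∨ (i.val + 1) % 4 = 1 then 1 else 0) := by
    have e2 : ∀ j : Fin (4 * n), (if (cylinder n).Adj (.inl i) (.inr j) then (1 : ℝ) else 0)
        = if i = j then (if (i.val + 1) % 4 = 0 ∨ (i.val + 1) % 4 = 1 then (1 : ℝ) else 0)
          else 0 := by
      intro j
      by_cases hij : i = j
      · subst hij
        rw [if_pos rfl]
        exact if_congr ((cylinder_adj_lr i i).trans (by simp)) rfl rfl
      · rw [if_neg hij, if_neg (fun hc => hij ((cylinder_adj_lr i j).mp hc).1)]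
    rw [Finset.sum_congr rfl fun j _ => e2 j, Finset.sum_ite_eq Finset.univ i
      (fun _ => if (i.val + 1) % 4 = 0 ∨ (i.val + 1) % 4 = 1 then (1 : ℝ) else 0)]
    simp
  rw [h1, h2]

lemma cylinder_degree_inr {n : ℕ} (hn : 1 ≤ n) (i : Fin (4 * n)) :
    (((cylinder n).degree (.inr i) : ℕ) : ℝ) =
      2 + (if (i.val + 1) % 4 = 0 ∨ (i.val + 1) % 4 = 1 then 1 else 0) := by
  rw [SimpleGraph.degree_eq_sum_if_adj, Fintype.sum_sum_type]
  have h1 : ∑ j : Fin (4 * n), (if (cylinder n).Adj (.inr i) (.inr j) then (1 : ℝ) else 0)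
      = 2 := by
    have e : (∑ j : Fin (4 * n), if (cylinder n).Adj (.inr i) (.inr j) then (1 : ℝ) else 0)
        = ∑ j : Fin (4 * n), if (SimpleGraph.cycleGraph (4 * n)).Adj i j then (1 : ℝ) else 0 :=
      Finset.sum_congr rfl fun j _ => if_congr (cylinder_adj_rr hn i j) rfl rfl
    rw [e, ← SimpleGraph.degree_eq_sum_if_adj, cycle_degree (by omega)]
    norm_num
  have h2 : ∑ j : Fin (4 * n), (if (cylinder n).Adj (.inr i) (.inl j) then (1 : ℝ) else 0)
      = (if (i.val + 1) % 4 = 0 ∨ (i.val + 1) % 4 = 1 then 1 else 0) := by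
    have e2 : ∀ j : Fin (4 * n), (if (cylinder n).Adj (.inr i) (.inl j) then (1 : ℝ) else 0)
        = if j = i then (if (j.val + 1) % 4 = 0 ∨ (j.val + 1) % 4 = 1 then (1 : ℝ) else 0)
          else 0 := by
      intro j
      by_cases hji : j = i
      · subst hji
        rw [if_pos rfl]
        exact if_congr ((cylinder_adj_rl j j).trans (by simp)) rfl rfl
      · rw [if_neg hji, if_neg (fun hc => hji ((cylinder_adj_rl i j).mp hc).1)]
    rw [Finset.sum_congr rfl fun j _ => e2 j, Finset.sum_ite_eq' Finset.univ i
      (fun j => if (j.val + 1) % 4 = 0 ∨ (j.val + 1) % 4 = 1 then (1 : ℝ) else 0)]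
    simp
  rw [h1, h2]
  ring

lemma lap_eq_blocks {n : ℕ} (hn : 1 ≤ n) :
    (cylinder n).lapMatrix ℝ =
      Matrix.fromBlocks ((SimpleGraph.cycleGraph (4 * n)).lapMatrix ℝ + crossD n) (-(crossD n))
        (-(crossD n)) ((SimpleGraph.cycleGraph (4 * n)).lapMatrix ℝ + crossD n) := by
  have hdeg : ∀ v : Fin (4 * n),
      (((SimpleGraph.cycleGraph (4 * n)).degree v : ℕ) : ℝ) = 2 := by
    intro v
    rw [cycle_degree (by omega)]
    norm_num
  ext a b
  rcases a with i | i <;> rcases b with j | j <;>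
    simp only [SimpleGraph.lapMatrix, SimpleGraph.degMatrix, Matrix.sub_apply,
      Matrix.add_apply, Matrix.fromBlocks_apply₁₁, Matrix.fromBlocks_apply₁₂,
      Matrix.fromBlocks_apply₂₁, Matrix.fromBlocks_apply₂₂, Matrix.neg_apply,
      SimpleGraph.adjMatrix_apply, crossD, Matrix.diagonal_apply]
  · by_cases h : i = j
    · subst h
      simp only [if_pos rfl]
      rw [cylinder_degree_inl hn i, hdeg i]
      have h1 : ¬ (cylinder n).Adj (.inl i) (.inl i) := (cylinder n).irrefl
      have h2 : ¬ (SimpleGraph.cycleGraph (4 * n)).Adj i i :=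
        (SimpleGraph.cycleGraph (4 * n)).irrefl
      rw [if_neg h1, if_neg h2]
      simp
    · have h' : (Sum.inl i : Fin (4 * n) ⊕ Fin (4 * n)) ≠ Sum.inl j := by
        simpa using h
      simp only [if_neg h', if_neg h]
      rw [if_congr (cylinder_adj_ll hn i j) rfl rfl]
      ring
  · have h' : (Sum.inl i : Fin (4 * n) ⊕ Fin (4 * n)) ≠ Sum.inr j := Sum.inl_ne_inr
    rw [if_neg h']
    have e : (if (cylinder n).Adj (.inl i) (.inr j) then (1 : ℝ) else 0)
        = if i = j then (if (i.val + 1) % 4 = 0 ∨ (i.val + 1) % 4 = 1 then (1 : ℝ) else 0)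
          else 0 := by
      by_cases hij : i = j
      · subst hij
        rw [if_pos rfl]
        exact if_congr ((cylinder_adj_lr i i).trans (by simp)) rfl rfl
      · rw [if_neg hij, if_neg (fun hc => hij ((cylinder_adj_lr i j).mp hc).1)]
    rw [e]
    ring
  · have h' : (Sum.inr i : Fin (4 * n) ⊕ Fin (4 * n)) ≠ Sum.inl j := Sum.inr_ne_inl
    rw [if_neg h']
    have e : (if (cylinder n).Adj (.inr i) (.inl j) then (1 : ℝ) else 0)
        = if i = j then (if (i.val + 1) % 4 = 0 ∨ (i.val + 1) % 4 = 1 then (1 : ℝ) else 0)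
          else 0 := by
      by_cases hij : i = j
      · subst hij
        rw [if_pos rfl]
        exact if_congr ((cylinder_adj_rl i i).trans (by simp)) rfl rfl
      · rw [if_neg hij, if_neg (fun hc => hij ((cylinder_adj_rl i j).mp hc).1.symm)]
    rw [e]
    ring
  · by_cases h : i = j
    · subst h
      simp only [if_pos rfl]
      rw [cylinder_degree_inr hn i, hdeg i]
      have h1 : ¬ (cylinder n).Adj (.inr i) (.inr i) := (cylinder n).irrefl
      have h2 : ¬ (SimpleGraph.cycleGraph (4 * n)).Adj i i :=
        (SimpleGraph.cycleGraph (4 * n)).irrefl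
      rw [if_neg h1, if_neg h2]
      simp
    · have h' : (Sum.inr i : Fin (4 * n) ⊕ Fin (4 * n)) ≠ Sum.inr j := by
        simpa using h
      simp only [if_neg h', if_neg h]
      rw [if_congr (cylinder_adj_rr hn i j) rfl rfl]
      ring

lemma LS'_eq {n : ℕ} (hn : 1 ≤ n) :
    LS' n = (SimpleGraph.cycleGraph (4 * n)).lapMatrix ℝ + crossD n + crossD n := by
  have hdeg : ∀ v : Fin (4 * n),
      (((SimpleGraph.cycleGraph (4 * n)).degree v : ℕ) : ℝ) = 2 := by
    intro v
    rw [cycle_degree (by omega)]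
    norm_num
  ext i j
  simp only [LS', Matrix.of_apply, SimpleGraph.lapMatrix, SimpleGraph.degMatrix,
    Matrix.sub_apply, Matrix.add_apply, SimpleGraph.adjMatrix_apply, crossD,
    Matrix.diagonal_apply]
  by_cases h : i = j
  · subst h
    rw [if_pos rfl, if_pos rfl, if_pos rfl, hdeg i,
      if_neg ((SimpleGraph.cycleGraph (4 * n)).irrefl)]
    by_cases hc : (i.val + 1) % 4 = 0 ∨ (i.val + 1) % 4 = 1
    · rw [if_pos hc, if_pos hc]; ring
    · rw [if_neg hc, if_neg hc]; ring
  · have hv : ¬ i.val = j.val := fun hv => h (Fin.ext hv)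
    simp only [if_neg hv, if_neg h]
    rw [if_congr (cycle_adj_iff (by omega) i j) rfl rfl]
    have hi := i.isLt
    have hj := j.isLt
    split_ifs <;> first | ring1 | (exfalso; omega)

theorem stmt_11 (n : ℕ) (hn : 1 ≤ n) :
    ((cylinder n).lapMatrix ℝ).charpoly
      = ((SimpleGraph.cycleGraph (4 * n)).lapMatrix ℝ).charpoly * (LS' n).charpoly := by
  rw [lap_eq_blocks hn, charpoly_fromBlocks_symm]
  have e1 : ((SimpleGraph.cycleGraph (4 * n)).lapMatrix ℝ + crossD n) + (-(crossD n))
      = (SimpleGraph.cycleGraph (4 * n)).lapMatrix ℝ := by abel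
  have e2 : ((SimpleGraph.cycleGraph (4 * n)).lapMatrix ℝ + crossD n) - (-(crossD n))
      = LS' n := by rw [LS'_eq hn]; abel
  rw [e1, e2]
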